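/- For fixed φ₀ ∈ (0, π/2), the map T_{D⁻}(α) := 2T(α) − 2T₁(α, φ₀) is strictly increasing on (φ₀, π/2); in particular, if 0 < φ₀ < φ₁ < π/2 then T_{D⁻}(α) > 2T(φ₁) − 2T₁(φ₁, φ₀) for every α ∈ (φ₁, π/2). -/

import Mathlib

/-!
Substituting `sin² x = sin² p + μ sin² θ` with `μ = sin² γ − sin² p` turns
`T(γ) − T₁(γ, p) = ∫_p^γ dx / √(cos 2x − cos 2γ)` into
`∫₀^{π/2} √μ sin θ / √(2q(1 − q)) dθ`, where `q = sin² p + μ sin² θ`: the singularity at `x = γ`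
is absorbed by the Jacobian. For fixed `θ` this integrand is strictly increasing in `μ`, as both
`μ / q` and `q` increase with `μ`, and `μ` increases with `γ`.
-/

open Real

/-- The time map `T(α) = ∫₀^α dx / √(cos 2x − cos 2α)`. -/
noncomputable def timeMapT (α : ℝ) : ℝ :=
  ∫ x in (0:ℝ)..α, 1 / Real.sqrt (Real.cos (2 * x) - Real.cos (2 * α))

/-- The time map `T₁(α, φ) = ∫₀^φ dx / √(cos 2x − cos 2α)`. -/
noncomputable def timeMapT1 (α φ : ℝ) : ℝ :=
  ∫ x in (0:ℝ)..φ, 1 / Real.sqrt (Real.cos (2 * x) - Real.cos (2 * α))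

open Set MeasureTheory intervalIntegral

namespace Real

theorem cos_two_mul_sub_cos_two_mul (x y : ℝ) :
    cos (2 * x) - cos (2 * y) = 2 * (sin y ^ 2 - sin x ^ 2) := by
  rw [cos_two_mul_eq_one_sub, cos_two_mul_eq_one_sub]; ring

theorem sin_sq_lt_sin_sq {x y : ℝ} (hx : 0 ≤ x) (hxy : x < y) (hy : y ≤ π / 2) :
    sin x ^ 2 < sin y ^ 2 := by
  have := sin_lt_sin_of_lt_of_le_pi_div_two (by linarith [pi_pos]) hy hxy
  have := sin_nonneg_of_nonneg_of_le_pi hx (by linarith [pi_pos])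
  nlinarith

theorem arcsin_sqrt_sin_sq {x : ℝ} (hx : 0 ≤ x) (hx' : x ≤ π / 2) : arcsin √(sin x ^ 2) = x := by
  rw [sqrt_sq (sin_nonneg_of_nonneg_of_le_pi hx (by linarith [pi_pos])),
    arcsin_sin (by linarith [pi_pos]) hx']

end Real

noncomputable def timeMapIntegrand (γ x : ℝ) : ℝ := 1 / √(cos (2 * x) - cos (2 * γ))

theorem continuousOn_timeMapIntegrand {γ : ℝ} (hγ : γ ≤ π / 2) :
    ContinuousOn (timeMapIntegrand γ) (Ico 0 γ) := by
  refine continuousOn_const.div (by fun_prop) fun x hx => ?_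
  refine (sqrt_pos.2 (sub_pos.2 ?_)).ne'
  exact cos_lt_cos_of_nonneg_of_le_pi (by linarith [hx.1]) (by linarith) (by linarith [hx.2])

noncomputable def sinSqSubst (c μ θ : ℝ) : ℝ := arcsin √(c + μ * sin θ ^ 2)

noncomputable def sinSqSubstDeriv (c μ θ : ℝ) : ℝ :=
  μ * sin θ * cos θ / (√(c + μ * sin θ ^ 2) * √(1 - (c + μ * sin θ ^ 2)))

noncomputable def timeMapKernel (c μ θ : ℝ) : ℝ :=
  √μ * sin θ / √(2 * (c + μ * sin θ ^ 2) * (1 - (c + μ * sin θ ^ 2)))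

section Substitution

variable {c μ : ℝ}

theorem mem_Ioo_add_mul_sin_sq (hc : 0 < c) (hμ : 0 ≤ μ) (hcμ : c + μ < 1) (θ : ℝ) :
    c + μ * sin θ ^ 2 ∈ Ioo 0 1 := by
  have := sin_sq_le_one θ
  constructor <;> nlinarith [sq_nonneg (sin θ)]

theorem hasDerivAt_sinSqSubst (hc : 0 < c) (hμ : 0 ≤ μ) (hcμ : c + μ < 1) (θ : ℝ) :
    HasDerivAt (sinSqSubst c μ) (sinSqSubstDeriv c μ θ) θ := by
  obtain ⟨hq0, hq1⟩ := mem_Ioo_add_mul_sin_sq hc hμ hcμ θ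
  set q := c + μ * sin θ ^ 2 with hq_def
  have hsq : √q < 1 := (sqrt_lt' one_pos).2 (by simpa using hq1)
  have hq : HasDerivAt (fun θ => c + μ * sin θ ^ 2) (μ * (2 * sin θ * cos θ)) θ := by
    simpa using ((hasDerivAt_sin θ).pow 2).const_mul μ |>.const_add c
  have := (hasDerivAt_arcsin (by linarith [sqrt_nonneg q]) hsq.ne).comp θ
    ((hasDerivAt_sqrt hq0.ne').comp θ hq)
  refine this.congr_deriv ?_
  rw [sinSqSubstDeriv, ← hq_def, sq_sqrt hq0.le]
  field_simp

theorem sinSqSubst_deriv_mul_timeMapIntegrand {γ θ : ℝ} (hc : 0 < c) (hμ : 0 < μ)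
    (hcμ : c + μ < 1) (hγ : sin γ ^ 2 = c + μ) (hθ : 0 < cos θ) :
    sinSqSubstDeriv c μ θ * timeMapIntegrand γ (sinSqSubst c μ θ) = timeMapKernel c μ θ := by
  obtain ⟨hq0, hq1⟩ := mem_Ioo_add_mul_sin_sq hc hμ.le hcμ θ
  set q := c + μ * sin θ ^ 2 with hq
  have hsin : sin (sinSqSubst c μ θ) ^ 2 = q := by
    rw [sinSqSubst, sin_arcsin (by linarith [sqrt_nonneg q]) (sqrt_le_one.2 hq1.le), sq_sqrt hq0.le]
  have hgap : cos (2 * sinSqSubst c μ θ) - cos (2 * γ) = 2 * μ * cos θ ^ 2 := by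
    rw [cos_two_mul_sub_cos_two_mul, hsin, hγ, hq, cos_sq']; ring
  have h1 : √(2 * μ * cos θ ^ 2) = √2 * √μ * cos θ := by
    rw [sqrt_mul (by positivity), sqrt_mul (by positivity), sqrt_sq hθ.le]
  have h2 : √(2 * q * (1 - q)) = √2 * √q * √(1 - q) := by
    rw [sqrt_mul (by positivity), sqrt_mul (by positivity)]
  rw [sinSqSubstDeriv, timeMapIntegrand, timeMapKernel, hgap, h1, ← hq, h2]
  have hμ' : 0 < √μ := sqrt_pos.2 hμ
  have hq0' : 0 < √q := sqrt_pos.2 hq0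
  have hq1' : 0 < √(1 - q) := sqrt_pos.2 (by linarith)
  field_simp
  rw [sq_sqrt hμ.le]
  ring

theorem continuous_sinSqSubst (c μ : ℝ) : Continuous (sinSqSubst c μ) := by
  unfold sinSqSubst; fun_prop

theorem sinSqSubstDeriv_nonneg (hμ : 0 ≤ μ) {θ : ℝ} (hθ : θ ∈ Icc 0 (π / 2)) :
    0 ≤ sinSqSubstDeriv c μ θ := by
  have hsin := sin_nonneg_of_nonneg_of_le_pi hθ.1 (by linarith [hθ.2, pi_pos])
  have hcos := cos_nonneg_of_mem_Icc ⟨by linarith [hθ.1, pi_pos], hθ.2⟩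
  unfold sinSqSubstDeriv
  positivity

theorem continuous_timeMapKernel (hc : 0 < c) (hμ : 0 ≤ μ) (hcμ : c + μ < 1) :
    Continuous (timeMapKernel c μ) := by
  refine Continuous.div (by fun_prop) (by fun_prop) fun θ => (sqrt_pos.2 ?_).ne'
  obtain ⟨hq0, hq1⟩ := mem_Ioo_add_mul_sin_sq hc hμ hcμ θ
  have : 0 < 1 - (c + μ * sin θ ^ 2) := by linarith
  positivity

theorem timeMapKernel_lt_timeMapKernel {ν θ : ℝ} (hc : 0 < c) (hμ : 0 ≤ μ) (hμν : μ < ν)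
    (hν : c + ν < 1) (hθ : 0 < sin θ) : timeMapKernel c μ θ < timeMapKernel c ν θ := by
  obtain ⟨hqμ0, hqμ1⟩ := mem_Ioo_add_mul_sin_sq hc hμ (by linarith) θ
  obtain ⟨hqν0, hqν1⟩ := mem_Ioo_add_mul_sin_sq hc (hμ.trans hμν.le) hν θ
  have hs : 0 < sin θ ^ 2 := by positivity
  have hnum : μ * (c + ν * sin θ ^ 2) < ν * (c + μ * sin θ ^ 2) := by nlinarith
  have hden : 1 - (c + ν * sin θ ^ 2) ≤ 1 - (c + μ * sin θ ^ 2) := by nlinarith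
  simp only [timeMapKernel, mul_comm √μ, mul_comm √ν, mul_div_assoc]
  refine mul_lt_mul_of_pos_left ?_ hθ
  rw [← sqrt_div' _ (by nlinarith), ← sqrt_div' _ (by nlinarith)]
  refine sqrt_lt_sqrt (by positivity) ?_
  rw [div_lt_div_iff₀ (by nlinarith) (by nlinarith)]
  nlinarith [mul_le_mul_of_nonneg_left hden (mul_nonneg hqμ0.le (hμ.trans hμν.le))]

end Substitution

theorem sinSqSubst_zero {p : ℝ} (hp : 0 ≤ p) (hp' : p ≤ π / 2) (μ : ℝ) :
    sinSqSubst (sin p ^ 2) μ 0 = p := by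
  simp [sinSqSubst, arcsin_sqrt_sin_sq hp hp']

theorem sinSqSubst_pi_div_two {γ : ℝ} (hγ : 0 ≤ γ) (hγ' : γ ≤ π / 2) (c : ℝ) :
    sinSqSubst c (sin γ ^ 2 - c) (π / 2) = γ := by
  simp [sinSqSubst, arcsin_sqrt_sin_sq hγ hγ']

section ChangeOfVariables

variable {c μ γ : ℝ}

theorem eqOn_sinSqSubstDeriv_smul_timeMapIntegrand (hc : 0 < c) (hμ : 0 < μ) (hcμ : c + μ < 1)
    (hγ : sin γ ^ 2 = c + μ) :
    EqOn (fun θ => sinSqSubstDeriv c μ θ • timeMapIntegrand γ (sinSqSubst c μ θ))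
      (timeMapKernel c μ) (Ioo 0 (π / 2)) := fun θ hθ =>
  sinSqSubst_deriv_mul_timeMapIntegrand hc hμ hcμ hγ
    (cos_pos_of_mem_Ioo ⟨by linarith [hθ.1, pi_pos], hθ.2⟩)

theorem integrableOn_timeMapIntegrand (hc : 0 < c) (hμ : 0 < μ) (hcμ : c + μ < 1)
    (hγ : sin γ ^ 2 = c + μ) :
    IntegrableOn (timeMapIntegrand γ) (Icc (sinSqSubst c μ 0) (sinSqSubst c μ (π / 2))) := by
  refine (integrableOn_Icc_deriv_smul_iff_of_deriv_nonneg
    (continuous_sinSqSubst c μ).continuousOn (fun θ _ => hasDerivAt_sinSqSubst hc hμ.le hcμ θ)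
    (fun θ hθ => sinSqSubstDeriv_nonneg hμ.le (Ioo_subset_Icc_self hθ)) (by positivity)).1 ?_
  rw [integrableOn_Icc_iff_integrableOn_Ioo]
  exact ((continuous_timeMapKernel hc hμ.le hcμ).integrableOn_Icc.mono_set
    Ioo_subset_Icc_self).congr_fun
    (eqOn_sinSqSubstDeriv_smul_timeMapIntegrand hc hμ hcμ hγ).symm measurableSet_Ioo

theorem setIntegral_timeMapIntegrand_eq_integral_timeMapKernel (hc : 0 < c) (hμ : 0 < μ)
    (hcμ : c + μ < 1) (hγ : sin γ ^ 2 = c + μ) :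
    ∫ x in Icc (sinSqSubst c μ 0) (sinSqSubst c μ (π / 2)), timeMapIntegrand γ x =
      ∫ θ in 0..π / 2, timeMapKernel c μ θ := by
  rw [← integral_Icc_deriv_smul_of_deriv_nonneg (continuous_sinSqSubst c μ).continuousOn
    (fun θ _ => hasDerivAt_sinSqSubst hc hμ.le hcμ θ)
    (fun θ hθ => sinSqSubstDeriv_nonneg hμ.le (Ioo_subset_Icc_self hθ)) (by positivity),
    integral_of_le (by positivity), integral_Icc_eq_integral_Ioo, integral_Ioc_eq_integral_Ioo]
  exact setIntegral_congr_fun measurableSet_Ioo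
    (eqOn_sinSqSubstDeriv_smul_timeMapIntegrand hc hμ hcμ hγ)

end ChangeOfVariables

theorem timeMapT_sub_timeMapT1 {p γ : ℝ} (hp : 0 < p) (hpγ : p < γ) (hγ : γ < π / 2) :
    timeMapT γ - timeMapT1 γ p =
      ∫ θ in 0..π / 2, timeMapKernel (sin p ^ 2) (sin γ ^ 2 - sin p ^ 2) θ := by
  have hc : 0 < sin p ^ 2 := pow_pos (sin_pos_of_pos_of_lt_pi hp (by linarith [pi_pos])) 2
  have hμ : 0 < sin γ ^ 2 - sin p ^ 2 := sub_pos.2 (sin_sq_lt_sin_sq hp.le hpγ hγ.le)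
  have hcμ : sin p ^ 2 + (sin γ ^ 2 - sin p ^ 2) < 1 := by
    simpa using sin_sq_lt_sin_sq (hp.trans hpγ).le hγ le_rfl
  have hγ' : sin γ ^ 2 = sin p ^ 2 + (sin γ ^ 2 - sin p ^ 2) := by ring
  have hends : Icc (sinSqSubst (sin p ^ 2) (sin γ ^ 2 - sin p ^ 2) 0)
      (sinSqSubst (sin p ^ 2) (sin γ ^ 2 - sin p ^ 2) (π / 2)) = Icc p γ := by
    rw [sinSqSubst_zero hp.le (hpγ.trans hγ).le, sinSqSubst_pi_div_two (hp.trans hpγ).le hγ.le]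
  have h0p : IntervalIntegrable (timeMapIntegrand γ) volume 0 p :=
    ((continuousOn_timeMapIntegrand hγ.le).mono
      (Icc_subset_Ico_right hpγ)).intervalIntegrable_of_Icc hp.le
  have hpγ' : IntervalIntegrable (timeMapIntegrand γ) volume p γ := by
    rw [intervalIntegrable_iff_integrableOn_Icc_of_le hpγ.le, ← hends]
    exact integrableOn_timeMapIntegrand hc hμ hcμ hγ'
  change (∫ x in 0..γ, timeMapIntegrand γ x) - ∫ x in 0..p, timeMapIntegrand γ x = _
  rw [← integral_add_adjacent_intervals h0p hpγ', add_sub_cancel_left, integral_of_le hpγ.le,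
    ← integral_Icc_eq_integral_Ioc, ← hends,
    setIntegral_timeMapIntegrand_eq_integral_timeMapKernel hc hμ hcμ hγ']

theorem strictMonoOn_timeMapT_sub_timeMapT1 {p : ℝ} (hp : 0 < p) :
    StrictMonoOn (fun γ => timeMapT γ - timeMapT1 γ p) (Ioo p (π / 2)) := by
  intro b hb a ha hba
  have hc : 0 < sin p ^ 2 :=
    pow_pos (sin_pos_of_pos_of_lt_pi hp (by linarith [hb.1, hb.2, pi_pos])) 2
  have hμ : 0 ≤ sin b ^ 2 - sin p ^ 2 := sub_nonneg.2 (sin_sq_lt_sin_sq hp.le hb.1 hb.2.le).le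
  have hμν : sin b ^ 2 - sin p ^ 2 < sin a ^ 2 - sin p ^ 2 :=
    sub_lt_sub_right (sin_sq_lt_sin_sq (hp.trans hb.1).le hba ha.2.le) _
  have hν : sin p ^ 2 + (sin a ^ 2 - sin p ^ 2) < 1 := by
    simpa using sin_sq_lt_sin_sq (hp.trans ha.1).le ha.2 le_rfl
  have hlt : ∀ θ ∈ Ioc 0 (π / 2), timeMapKernel (sin p ^ 2) (sin b ^ 2 - sin p ^ 2) θ <
      timeMapKernel (sin p ^ 2) (sin a ^ 2 - sin p ^ 2) θ := fun θ hθ =>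
    timeMapKernel_lt_timeMapKernel hc hμ hμν hν
      (sin_pos_of_pos_of_lt_pi hθ.1 (by linarith [hθ.2, pi_pos]))
  simp only [timeMapT_sub_timeMapT1 hp hb.1 hb.2, timeMapT_sub_timeMapT1 hp ha.1 ha.2]
  exact integral_lt_integral_of_continuousOn_of_le_of_exists_lt (by positivity)
    (continuous_timeMapKernel hc hμ (by linarith)).continuousOn
    (continuous_timeMapKernel hc (by linarith) hν).continuousOn (fun θ hθ => (hlt θ hθ).le)
    ⟨π / 2, right_mem_Icc.2 (by positivity), hlt _ (right_mem_Ioc.2 (by positivity))⟩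

theorem timeMapTDminus_strictMono (φ₀ : ℝ) (h₀ : φ₀ ∈ Set.Ioo 0 (π / 2)) :
    StrictMonoOn (fun α => 2 * timeMapT α - 2 * timeMapT1 α φ₀)
      (Set.Ioo φ₀ (π / 2)) ∧
    ∀ φ₁ : ℝ, φ₀ < φ₁ → φ₁ < π / 2 → ∀ α ∈ Set.Ioo φ₁ (π / 2),
      2 * timeMapT α - 2 * timeMapT1 α φ₀ >
        2 * timeMapT φ₁ - 2 * timeMapT1 φ₁ φ₀ := by
  have hmono : StrictMonoOn (fun α => 2 * timeMapT α - 2 * timeMapT1 α φ₀) (Ioo φ₀ (π / 2)) :=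
    fun b hb a ha hba => by
      linarith [strictMonoOn_timeMapT_sub_timeMapT1 h₀.1 hb ha hba]
  exact ⟨hmono, fun φ₁ h₁ h₁' α hα => hmono ⟨h₁, h₁'⟩ ⟨h₁.trans hα.1, hα.2⟩ hα.1⟩
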